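/- arXiv:math/0411066 — 3 statements merged into one kernel-verified Lean document; each statement's English description precedes it below -/
import Mathlib

section
/- Let n be a natural number, let P₁, P₂ : ℝⁿ → ℂ be polynomial functions, and let H : ℝⁿ → ℂ be a smooth function with compact support. Then the iterated integral ∫_{ℝⁿ} dX P₂(X) ∫_{ℝⁿ} dξ e^{−i⟨ξ,X⟩} ∫_{ℝⁿ} dY P₁(Y) ∫_{ℝⁿ} dζ e^{−i⟨ζ,Y⟩} H(ξ + ζ) is well defined (each successive integrand is Lebesgue integrable) and equals (2π)ⁿ · ∫_{ℝⁿ} dX P₁(X) P₂(X) ∫_{ℝⁿ} dξ e^{−i⟨ξ,X⟩} H(ξ). -/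
open MeasureTheory InnerProductSpace

open Real SchwartzMap
open scoped FourierTransform

noncomputable section FourierAuxSec



variable {E : Type*} [NormedAddCommGroup E] [NormedSpace ℝ E]

private lemma htg_mul {f g : E → ℂ} (hf : Function.HasTemperateGrowth f)
    (hg : Function.HasTemperateGrowth g) :
    Function.HasTemperateGrowth fun x => f x * g x := by
  refine ⟨hf.1.mul hg.1, fun N => ?_⟩
  obtain ⟨k₁, C₁, hC₁, h₁⟩ := hf.norm_iteratedFDeriv_le_uniform N
  obtain ⟨k₂, C₂, hC₂, h₂⟩ := hg.norm_iteratedFDeriv_le_uniform N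
  refine ⟨k₁ + k₂, 2 ^ N * (C₁ * C₂), fun x => ?_⟩
  refine (norm_iteratedFDeriv_mul_le hf.1 hg.1 x (by exact_mod_cast le_top)).trans ?_
  have key : ∀ i ∈ Finset.range (N + 1),
      (N.choose i : ℝ) * ‖iteratedFDeriv ℝ i f x‖ * ‖iteratedFDeriv ℝ (N - i) g x‖
        ≤ (N.choose i : ℝ) * (C₁ * C₂ * (1 + ‖x‖) ^ (k₁ + k₂)) := by
    intro i hi
    rw [Finset.mem_range, Nat.lt_succ_iff] at hi
    have hmul := mul_le_mul (h₁ i hi x) (h₂ (N - i) (Nat.sub_le _ _) x)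
      (norm_nonneg _) (by positivity)
    rw [mul_assoc]
    refine mul_le_mul_of_nonneg_left (hmul.trans (le_of_eq ?_)) (by positivity)
    rw [pow_add]; ring
  refine (Finset.sum_le_sum key).trans (le_of_eq ?_)
  rw [← Finset.sum_mul, ← Nat.cast_sum, Nat.sum_range_choose]
  push_cast; ring

private lemma htg_add {f g : E → ℂ} (hf : Function.HasTemperateGrowth f)
    (hg : Function.HasTemperateGrowth g) :
    Function.HasTemperateGrowth fun x => f x + g x := by
  refine ⟨hf.1.add hg.1, fun N => ?_⟩
  obtain ⟨k₁, C₁, hC₁, h₁⟩ := hf.norm_iteratedFDeriv_le_uniform N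
  obtain ⟨k₂, C₂, hC₂, h₂⟩ := hg.norm_iteratedFDeriv_le_uniform N
  refine ⟨max k₁ k₂, C₁ + C₂, fun x => ?_⟩
  have hx : (1:ℝ) ≤ 1 + ‖x‖ := by linarith [norm_nonneg x]
  have hadd : iteratedFDeriv ℝ N (fun x => f x + g x) x
      = iteratedFDeriv ℝ N f x + iteratedFDeriv ℝ N g x := by
    have := iteratedFDeriv_add_apply (𝕜 := ℝ) (i := N) (x := x)
      (hf.1.contDiffAt.of_le (by exact_mod_cast le_top)) (hg.1.contDiffAt.of_le (by exact_mod_cast le_top))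
    exact this
  rw [hadd]
  calc ‖iteratedFDeriv ℝ N f x + iteratedFDeriv ℝ N g x‖
      ≤ ‖iteratedFDeriv ℝ N f x‖ + ‖iteratedFDeriv ℝ N g x‖ := norm_add_le _ _
    _ ≤ C₁ * (1 + ‖x‖) ^ k₁ + C₂ * (1 + ‖x‖) ^ k₂ :=
        add_le_add (h₁ N le_rfl x) (h₂ N le_rfl x)
    _ ≤ C₁ * (1 + ‖x‖) ^ max k₁ k₂ + C₂ * (1 + ‖x‖) ^ max k₁ k₂ := by
        have e1 : (1 + ‖x‖) ^ k₁ ≤ (1 + ‖x‖) ^ max k₁ k₂ :=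
          pow_le_pow_right₀ hx (le_max_left _ _)
        have e2 : (1 + ‖x‖) ^ k₂ ≤ (1 + ‖x‖) ^ max k₁ k₂ :=
          pow_le_pow_right₀ hx (le_max_right _ _)
        exact add_le_add (mul_le_mul_of_nonneg_left e1 hC₁) (mul_le_mul_of_nonneg_left e2 hC₂)
    _ = (C₁ + C₂) * (1 + ‖x‖) ^ max k₁ k₂ := by ring

private lemma htg_poly {n : ℕ} (p : MvPolynomial (Fin n) ℂ) :
    Function.HasTemperateGrowth fun X : EuclideanSpace ℝ (Fin n) =>
      MvPolynomial.eval (fun i => (X i : ℂ)) p := by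
  induction p using MvPolynomial.induction_on with
  | C c => simpa using Function.HasTemperateGrowth.const (E := EuclideanSpace ℝ (Fin n)) c
  | add p q hp hq => simpa using htg_add hp hq
  | mul_X p i hp =>
    have hc : Function.HasTemperateGrowth fun X : EuclideanSpace ℝ (Fin n) => ((X i : ℝ) : ℂ) := by
      have := (Complex.ofRealCLM.comp (EuclideanSpace.proj (𝕜 := ℝ) i)).hasTemperateGrowth
      exact this
    simpa using htg_mul hp hc

private def toSchwartz (f : E → ℂ) (h1 : ContDiff ℝ (⊤ : ℕ∞) f) (h2 : HasCompactSupport f) :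
    𝓢(E, ℂ) where
  toFun := f
  smooth' := h1
  decay' := by
    intro k m
    obtain ⟨C, hC⟩ := Continuous.bounded_above_of_compact_support
      (f := fun x => ‖x‖ ^ k * ‖iteratedFDeriv ℝ m f x‖)
      (((continuous_norm.pow k)).mul (h1.continuous_iteratedFDeriv
        (by exact_mod_cast le_top)).norm)
      (((h2.iteratedFDeriv m).norm).mul_left)
    exact ⟨C, fun x => by
      have := hC x
      rwa [Real.norm_eq_abs, abs_of_nonneg (by positivity)] at this⟩

@[simp] private lemma toSchwartz_apply (f : E → ℂ) (h1 : ContDiff ℝ (⊤ : ℕ∞) f)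
    (h2 : HasCompactSupport f) (x : E) : toSchwartz f h1 h2 x = f x := rfl

variable {n : ℕ}

private def scaleE (c : ℝ) (hc : c ≠ 0) :
    EuclideanSpace ℝ (Fin n) ≃L[ℝ] EuclideanSpace ℝ (Fin n) :=
  (LinearEquiv.smulOfNeZero ℝ _ c hc).toContinuousLinearEquiv

@[simp] private lemma scaleE_apply (c : ℝ) (hc : c ≠ 0) (x : EuclideanSpace ℝ (Fin n)) :
    scaleE c hc x = c • x := rfl

private lemma two_pi_inv_ne : ((2 * π)⁻¹ : ℝ) ≠ 0 := by positivity

private def physFT (f : 𝓢(EuclideanSpace ℝ (Fin n), ℂ)) : 𝓢(EuclideanSpace ℝ (Fin n), ℂ) :=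
  compCLMOfContinuousLinearEquiv ℝ (scaleE (2 * π)⁻¹ two_pi_inv_ne)
    (fourierTransformCLM ℝ f)

private lemma physFT_apply (f : 𝓢(EuclideanSpace ℝ (Fin n), ℂ)) (Y : EuclideanSpace ℝ (Fin n)) :
    physFT f Y = 𝓕 (⇑f) ((2 * π)⁻¹ • Y) := rfl

private lemma physFT_eq (f : 𝓢(EuclideanSpace ℝ (Fin n), ℂ)) (Y : EuclideanSpace ℝ (Fin n)) :
    physFT f Y = ∫ ζ : EuclideanSpace ℝ (Fin n),
      Complex.exp (-Complex.I * (⟪ζ, Y⟫_ℝ : ℂ)) * f ζ := by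
  rw [physFT_apply, Real.fourier_eq']
  congr 1
  funext ζ
  rw [smul_eq_mul, real_inner_smul_right]
  congr 1
  have : -2 * π * ((2 * π)⁻¹ * ⟪ζ, Y⟫_ℝ) = -⟪ζ, Y⟫_ℝ := by
    have h2π : (2 * π : ℝ) ≠ 0 := by positivity
    field_simp
  rw [this]
  push_cast
  ring

private lemma integrable_char_mul {f : EuclideanSpace ℝ (Fin n) → ℂ} (hf : Integrable f)
    (c : EuclideanSpace ℝ (Fin n)) :
    Integrable fun x : EuclideanSpace ℝ (Fin n) =>
      Complex.exp (-Complex.I * (⟪x, c⟫_ℝ : ℂ)) * f x := by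
  have hcont : Continuous fun x : EuclideanSpace ℝ (Fin n) =>
      -Complex.I * (⟪x, c⟫_ℝ : ℂ) :=
    continuous_const.mul (Complex.continuous_ofReal.comp (continuous_id.inner continuous_const))
  refine hf.bdd_mul ((Complex.continuous_exp.comp hcont).aestronglyMeasurable) (c := 1) (Filter.Eventually.of_forall fun x => ?_)
  rw [Complex.norm_exp]
  simp

private lemma shift_integral (H : EuclideanSpace ℝ (Fin n) → ℂ) (ξ Y : EuclideanSpace ℝ (Fin n)) :
    ∫ ζ : EuclideanSpace ℝ (Fin n), Complex.exp (-Complex.I * (⟪ζ, Y⟫_ℝ : ℂ)) * H (ξ + ζ)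
      = Complex.exp (Complex.I * (⟪ξ, Y⟫_ℝ : ℂ)) *
        ∫ ζ : EuclideanSpace ℝ (Fin n), Complex.exp (-Complex.I * (⟪ζ, Y⟫_ℝ : ℂ)) * H ζ := by
  calc ∫ ζ : EuclideanSpace ℝ (Fin n), Complex.exp (-Complex.I * (⟪ζ, Y⟫_ℝ : ℂ)) * H (ξ + ζ)
      = ∫ ζ : EuclideanSpace ℝ (Fin n),
          (fun w => Complex.exp (-Complex.I * (⟪w - ξ, Y⟫_ℝ : ℂ)) * H w) (ξ + ζ) := by
        congr 1
        funext ζ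
        simp [add_sub_cancel_left]
    _ = ∫ w : EuclideanSpace ℝ (Fin n),
          Complex.exp (-Complex.I * (⟪w - ξ, Y⟫_ℝ : ℂ)) * H w :=
        integral_add_left_eq_self
          (fun w => Complex.exp (-Complex.I * (⟪w - ξ, Y⟫_ℝ : ℂ)) * H w) ξ
    _ = _ := by
        rw [← integral_const_mul]
        congr 1
        funext w
        rw [inner_sub_left, ← mul_assoc, ← Complex.exp_add]
        congr 2
        push_cast
        ring

private lemma physFT_physFT (f : 𝓢(EuclideanSpace ℝ (Fin n), ℂ)) (X : EuclideanSpace ℝ (Fin n)) :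
    physFT (physFT f) X = (((2 * π) ^ n : ℝ) : ℂ) * f (-X) := by
  have h2π : (0:ℝ) < 2 * π := by positivity
  have hint : Integrable (𝓕 (⇑f)) := (fourierTransformCLM ℝ f).integrable
  have hinv : 𝓕 (𝓕 (⇑f)) X = f (-X) := by
    have h1 : 𝓕⁻ (𝓕 (⇑f)) (-X) = f (-X) := by
      rw [Continuous.fourierInv_fourier_eq f.continuous f.integrable hint]
    rw [← h1, Real.fourierInv_eq_fourier_neg, neg_neg]
  have hF : ∀ x : EuclideanSpace ℝ (Fin n),
      Complex.exp (-Complex.I * (⟪(2 * π : ℝ) • x, X⟫_ℝ : ℂ)) * physFT f ((2 * π : ℝ) • x)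
        = Complex.exp (↑(-2 * π * ⟪x, X⟫_ℝ) * Complex.I) • 𝓕 (⇑f) x := by
    intro x
    rw [physFT_apply, smul_smul, inv_mul_cancel₀ h2π.ne', one_smul, real_inner_smul_left,
      smul_eq_mul]
    congr 1
    push_cast
    ring
  have key := MeasureTheory.Measure.integral_comp_smul (volume : Measure (EuclideanSpace ℝ (Fin n)))
    (fun Y : EuclideanSpace ℝ (Fin n) =>
      Complex.exp (-Complex.I * (⟪Y, X⟫_ℝ : ℂ)) * physFT f Y) (2 * π)
  simp only [finrank_euclideanSpace_fin] at key
  simp only [hF] at key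
  rw [show ∫ x : EuclideanSpace ℝ (Fin n),
      Complex.exp (↑(-2 * π * ⟪x, X⟫_ℝ) * Complex.I) • 𝓕 (⇑f) x = 𝓕 (𝓕 (⇑f)) X from
    (Real.fourier_eq' (𝓕 (⇑f)) X).symm, hinv] at key
  rw [physFT_eq, key, abs_of_pos (by positivity : (0:ℝ) < ((2 * π) ^ n)⁻¹), Complex.real_smul,
    ← mul_assoc, ← Complex.ofReal_mul,
    mul_inv_cancel₀ (by positivity : ((2 * π : ℝ) ^ n) ≠ 0), Complex.ofReal_one, one_mul]

private def mulByTG {g : EuclideanSpace ℝ (Fin n) → ℂ} (hg : Function.HasTemperateGrowth g)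
    (f : 𝓢(EuclideanSpace ℝ (Fin n), ℂ)) : 𝓢(EuclideanSpace ℝ (Fin n), ℂ) :=
  bilinLeftCLM (ContinuousLinearMap.mul ℝ ℂ) hg f

@[simp] private lemma mulByTG_apply {g : EuclideanSpace ℝ (Fin n) → ℂ}
    (hg : Function.HasTemperateGrowth g) (f : 𝓢(EuclideanSpace ℝ (Fin n), ℂ))
    (x : EuclideanSpace ℝ (Fin n)) : mulByTG hg f x = f x * g x := rfl

private def negComp (f : 𝓢(EuclideanSpace ℝ (Fin n), ℂ)) : 𝓢(EuclideanSpace ℝ (Fin n), ℂ) :=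
  compCLMOfContinuousLinearEquiv ℝ
    (LinearIsometryEquiv.neg ℝ (E := EuclideanSpace ℝ (Fin n))).toContinuousLinearEquiv f

@[simp] private lemma negComp_apply (f : 𝓢(EuclideanSpace ℝ (Fin n), ℂ))
    (x : EuclideanSpace ℝ (Fin n)) : negComp f x = f (-x) := rfl


end FourierAuxSec

/-- For polynomial functions `P₁, P₂` and a compactly supported smooth `H` on `ℝⁿ`,
the iterated integral
`∫ dX P₂(X) ∫ dξ e^{−i⟨ξ,X⟩} ∫ dY P₁(Y) ∫ dζ e^{−i⟨ζ,Y⟩} H(ξ + ζ)`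
is well defined (every successive integrand is integrable) and equals
`(2π)ⁿ ∫ dX P₁(X) P₂(X) ∫ dξ e^{−i⟨ξ,X⟩} H(ξ)`. -/
theorem fourier_operator_composition_polynomial (n : ℕ)
    (P₁ P₂ : EuclideanSpace ℝ (Fin n) → ℂ)
    (hP₁ : ∃ p : MvPolynomial (Fin n) ℂ,
      ∀ X : EuclideanSpace ℝ (Fin n), P₁ X = MvPolynomial.eval (fun i => (X i : ℂ)) p)
    (hP₂ : ∃ p : MvPolynomial (Fin n) ℂ,
      ∀ X : EuclideanSpace ℝ (Fin n), P₂ X = MvPolynomial.eval (fun i => (X i : ℂ)) p)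
    (H : EuclideanSpace ℝ (Fin n) → ℂ) (hH : ContDiff ℝ (⊤ : ℕ∞) H)
    (hHsupp : HasCompactSupport H) :
    (∀ ξ Y : EuclideanSpace ℝ (Fin n),
      Integrable (fun ζ : EuclideanSpace ℝ (Fin n) =>
        Complex.exp (-Complex.I * (⟪ζ, Y⟫_ℝ : ℂ)) * H (ξ + ζ))) ∧
    (∀ ξ : EuclideanSpace ℝ (Fin n),
      Integrable (fun Y : EuclideanSpace ℝ (Fin n) =>
        P₁ Y * ∫ ζ : EuclideanSpace ℝ (Fin n),
          Complex.exp (-Complex.I * (⟪ζ, Y⟫_ℝ : ℂ)) * H (ξ + ζ))) ∧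
    (∀ X : EuclideanSpace ℝ (Fin n),
      Integrable (fun ξ : EuclideanSpace ℝ (Fin n) =>
        Complex.exp (-Complex.I * (⟪ξ, X⟫_ℝ : ℂ)) *
          ∫ Y : EuclideanSpace ℝ (Fin n),
            P₁ Y * ∫ ζ : EuclideanSpace ℝ (Fin n),
              Complex.exp (-Complex.I * (⟪ζ, Y⟫_ℝ : ℂ)) * H (ξ + ζ))) ∧
    Integrable (fun X : EuclideanSpace ℝ (Fin n) =>
      P₂ X * ∫ ξ : EuclideanSpace ℝ (Fin n),
        Complex.exp (-Complex.I * (⟪ξ, X⟫_ℝ : ℂ)) *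
          ∫ Y : EuclideanSpace ℝ (Fin n),
            P₁ Y * ∫ ζ : EuclideanSpace ℝ (Fin n),
              Complex.exp (-Complex.I * (⟪ζ, Y⟫_ℝ : ℂ)) * H (ξ + ζ)) ∧
    (∫ X : EuclideanSpace ℝ (Fin n),
      P₂ X * ∫ ξ : EuclideanSpace ℝ (Fin n),
        Complex.exp (-Complex.I * (⟪ξ, X⟫_ℝ : ℂ)) *
          ∫ Y : EuclideanSpace ℝ (Fin n),
            P₁ Y * ∫ ζ : EuclideanSpace ℝ (Fin n),
              Complex.exp (-Complex.I * (⟪ζ, Y⟫_ℝ : ℂ)) * H (ξ + ζ)) =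
      (((2 * Real.pi) ^ n : ℝ) : ℂ) *
        ∫ X : EuclideanSpace ℝ (Fin n),
          P₁ X * P₂ X * ∫ ξ : EuclideanSpace ℝ (Fin n),
            Complex.exp (-Complex.I * (⟪ξ, X⟫_ℝ : ℂ)) * H ξ := by
  obtain ⟨p₁, hp₁⟩ := hP₁
  obtain ⟨p₂, hp₂⟩ := hP₂
  have ht₁ : Function.HasTemperateGrowth P₁ := by
    have h := htg_poly p₁
    have e : P₁ = fun X => MvPolynomial.eval (fun i => (X i : ℂ)) p₁ := funext hp₁
    rwa [← e] at h
  have ht₂ : Function.HasTemperateGrowth P₂ := by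
    have h := htg_poly p₂
    have e : P₂ = fun X => MvPolynomial.eval (fun i => (X i : ℂ)) p₂ := funext hp₂
    rwa [← e] at h
  set h0 : 𝓢(EuclideanSpace ℝ (Fin n), ℂ) := toSchwartz H hH hHsupp with h0def
  set G : 𝓢(EuclideanSpace ℝ (Fin n), ℂ) := physFT h0 with Gdef
  set k1 : 𝓢(EuclideanSpace ℝ (Fin n), ℂ) := mulByTG ht₁ G with k1def
  set k2 : 𝓢(EuclideanSpace ℝ (Fin n), ℂ) := mulByTG ht₂ k1 with k2def
  have C1 : ∀ ξ Y : EuclideanSpace ℝ (Fin n),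
      Integrable (fun ζ : EuclideanSpace ℝ (Fin n) =>
        Complex.exp (-Complex.I * (⟪ζ, Y⟫_ℝ : ℂ)) * H (ξ + ζ)) := by
    intro ξ Y
    apply Continuous.integrable_of_hasCompactSupport
    · exact (Complex.continuous_exp.comp (continuous_const.mul
        (Complex.continuous_ofReal.comp (continuous_id.inner continuous_const)))).mul
        (hH.continuous.comp (continuous_const.add continuous_id))
    · have hc : HasCompactSupport fun ζ : EuclideanSpace ℝ (Fin n) => H (ξ + ζ) :=
        hHsupp.comp_homeomorph (Homeomorph.addLeft ξ)
      exact hc.mul_left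
  have E1 : ∀ ξ Y : EuclideanSpace ℝ (Fin n),
      (∫ ζ : EuclideanSpace ℝ (Fin n),
        Complex.exp (-Complex.I * (⟪ζ, Y⟫_ℝ : ℂ)) * H (ξ + ζ))
      = Complex.exp (Complex.I * (⟪ξ, Y⟫_ℝ : ℂ)) * G Y := by
    intro ξ Y
    rw [shift_integral H ξ Y]
    congr 1
    exact (physFT_eq h0 Y).symm
  have F2 : ∀ ξ : EuclideanSpace ℝ (Fin n),
      (fun Y : EuclideanSpace ℝ (Fin n) =>
        P₁ Y * ∫ ζ : EuclideanSpace ℝ (Fin n),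
          Complex.exp (-Complex.I * (⟪ζ, Y⟫_ℝ : ℂ)) * H (ξ + ζ))
      = fun Y : EuclideanSpace ℝ (Fin n) =>
          Complex.exp (-Complex.I * (⟪Y, -ξ⟫_ℝ : ℂ)) * k1 Y := by
    intro ξ
    funext Y
    rw [E1 ξ Y, k1def, mulByTG_apply]
    have harg : -Complex.I * ((⟪Y, -ξ⟫_ℝ : ℝ) : ℂ) = Complex.I * ((⟪ξ, Y⟫_ℝ : ℝ) : ℂ) := by
      rw [inner_neg_right, real_inner_comm]
      push_cast
      ring
    rw [harg]
    ring
  have C2 : ∀ ξ : EuclideanSpace ℝ (Fin n),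
      Integrable (fun Y : EuclideanSpace ℝ (Fin n) =>
        P₁ Y * ∫ ζ : EuclideanSpace ℝ (Fin n),
          Complex.exp (-Complex.I * (⟪ζ, Y⟫_ℝ : ℂ)) * H (ξ + ζ)) := by
    intro ξ
    rw [F2 ξ]
    exact integrable_char_mul k1.integrable (-ξ)
  have E2 : ∀ ξ : EuclideanSpace ℝ (Fin n),
      (∫ Y : EuclideanSpace ℝ (Fin n),
        P₁ Y * ∫ ζ : EuclideanSpace ℝ (Fin n),
          Complex.exp (-Complex.I * (⟪ζ, Y⟫_ℝ : ℂ)) * H (ξ + ζ))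
      = physFT k1 (-ξ) := by
    intro ξ
    rw [F2 ξ]
    exact (physFT_eq k1 (-ξ)).symm
  have C3 : ∀ X : EuclideanSpace ℝ (Fin n),
      Integrable (fun ξ : EuclideanSpace ℝ (Fin n) =>
        Complex.exp (-Complex.I * (⟪ξ, X⟫_ℝ : ℂ)) *
          ∫ Y : EuclideanSpace ℝ (Fin n),
            P₁ Y * ∫ ζ : EuclideanSpace ℝ (Fin n),
              Complex.exp (-Complex.I * (⟪ζ, Y⟫_ℝ : ℂ)) * H (ξ + ζ)) := by
    intro X
    simp only [E2]
    have e : (fun ξ : EuclideanSpace ℝ (Fin n) =>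
        Complex.exp (-Complex.I * (⟪ξ, X⟫_ℝ : ℂ)) * physFT k1 (-ξ))
        = fun ξ : EuclideanSpace ℝ (Fin n) =>
            Complex.exp (-Complex.I * (⟪ξ, X⟫_ℝ : ℂ)) * negComp (physFT k1) ξ := rfl
    rw [e]
    exact integrable_char_mul (negComp (physFT k1)).integrable X
  have E3 : ∀ X : EuclideanSpace ℝ (Fin n),
      (∫ ξ : EuclideanSpace ℝ (Fin n),
        Complex.exp (-Complex.I * (⟪ξ, X⟫_ℝ : ℂ)) *
          ∫ Y : EuclideanSpace ℝ (Fin n),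
            P₁ Y * ∫ ζ : EuclideanSpace ℝ (Fin n),
              Complex.exp (-Complex.I * (⟪ζ, Y⟫_ℝ : ℂ)) * H (ξ + ζ))
      = (((2 * π) ^ n : ℝ) : ℂ) * k1 X := by
    intro X
    simp only [E2]
    have hneg : (∫ ξ : EuclideanSpace ℝ (Fin n),
        Complex.exp (-Complex.I * (⟪ξ, X⟫_ℝ : ℂ)) * physFT k1 (-ξ))
        = ∫ ξ : EuclideanSpace ℝ (Fin n),
            Complex.exp (-Complex.I * (⟪ξ, -X⟫_ℝ : ℂ)) * physFT k1 ξ := by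
      rw [← integral_neg_eq_self (fun ξ : EuclideanSpace ℝ (Fin n) =>
        Complex.exp (-Complex.I * (⟪ξ, -X⟫_ℝ : ℂ)) * physFT k1 ξ)]
      congr 1
      funext ξ
      rw [inner_neg_neg]
    rw [hneg, ← physFT_eq (physFT k1) (-X), physFT_physFT k1 (-X), neg_neg]
  have C4 : Integrable (fun X : EuclideanSpace ℝ (Fin n) =>
      P₂ X * ∫ ξ : EuclideanSpace ℝ (Fin n),
        Complex.exp (-Complex.I * (⟪ξ, X⟫_ℝ : ℂ)) *
          ∫ Y : EuclideanSpace ℝ (Fin n),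
            P₁ Y * ∫ ζ : EuclideanSpace ℝ (Fin n),
              Complex.exp (-Complex.I * (⟪ζ, Y⟫_ℝ : ℂ)) * H (ξ + ζ)) := by
    simp only [E3]
    have e : (fun X : EuclideanSpace ℝ (Fin n) =>
        P₂ X * ((((2 * π) ^ n : ℝ) : ℂ) * k1 X))
        = fun X : EuclideanSpace ℝ (Fin n) => (((2 * π) ^ n : ℝ) : ℂ) * k2 X := by
      funext X
      simp only [k2def, k1def, mulByTG_apply]
      ring
    rw [e]
    exact k2.integrable.const_mul _
  refine ⟨C1, C2, C3, C4, ?_⟩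
  have EH : ∀ X : EuclideanSpace ℝ (Fin n),
      (∫ ξ : EuclideanSpace ℝ (Fin n),
        Complex.exp (-Complex.I * (⟪ξ, X⟫_ℝ : ℂ)) * H ξ) = G X :=
    fun X => (physFT_eq h0 X).symm
  simp only [E3, EH]
  rw [show (∫ X : EuclideanSpace ℝ (Fin n), P₂ X * ((((2 * π) ^ n : ℝ) : ℂ) * k1 X))
      = ∫ X : EuclideanSpace ℝ (Fin n), (((2 * π) ^ n : ℝ) : ℂ) * (P₁ X * P₂ X * G X) from by
    congr 1
    funext X
    simp only [k1def, mulByTG_apply]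
    ring]
  rw [integral_const_mul]
end

section
/- Let n be a natural number, let η : ℝⁿ → ℝⁿ be an invertible skew-symmetric linear map (⟨η u, v⟩ = −⟨u, η v⟩ for all u, v), let r, r′, q ∈ ℝⁿ, and let H : ℝⁿ → ℂ be a smooth function with compact support. For ℏ ∈ ℝ set F(ℏ) = ∫dX e^{i⟨r′,q⟩} e^{(i/2)⟨r′,X⟩} ∫dξ e^{−i⟨ξ,X⟩} ∫dY e^{i⟨r, q + ℏη(ξ)⟩} e^{(i/2)⟨r,Y⟩} ∫dζ e^{−i⟨ζ,Y⟩} H(η(ζ + ξ)), and let G(ℏ) be the same expression with r and r′ interchanged. Then (F(ℏ) − G(ℏ))/(iℏ) converges, as ℏ → 0 with ℏ ≠ 0, to (2π)^{2n} · ⟨r, η(r′)⟩ · e^{i⟨r + r′, q⟩} · H(η(r + r′)/2). -/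
open MeasureTheory InnerProductSpace
open scoped FourierTransform

noncomputable section

namespace QTC

/-- A smooth compactly supported function on Euclidean space is a Schwartz map. -/
def toSchwartz {n : ℕ} (f : EuclideanSpace ℝ (Fin n) → ℂ) (hf : ContDiff ℝ (⊤ : ℕ∞) f)
    (h2 : HasCompactSupport f) : SchwartzMap (EuclideanSpace ℝ (Fin n)) ℂ where
  toFun := f
  smooth' := hf
  decay' := by
    intro k m
    have hd : HasCompactSupport (iteratedFDeriv ℝ m f) := h2.iteratedFDeriv m
    have hsupp : HasCompactSupport
        (fun x : EuclideanSpace ℝ (Fin n) => ‖x‖ ^ k • iteratedFDeriv ℝ m f x) := by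
      refine HasCompactSupport.intro hd fun x hx => ?_
      rw [image_eq_zero_of_notMem_tsupport hx, smul_zero]
    obtain ⟨C, hC⟩ := hsupp.exists_bound_of_continuous
      ((continuous_norm.pow k).smul (hf.continuous_iteratedFDeriv (by exact_mod_cast le_top)))
    refine ⟨C, fun x => ?_⟩
    have := hC x
    rwa [norm_smul, norm_pow, norm_norm] at this

lemma integrable_fourier {n : ℕ} (f : EuclideanSpace ℝ (Fin n) → ℂ) (hf : ContDiff ℝ (⊤ : ℕ∞) f)
    (h2 : HasCompactSupport f) : Integrable (𝓕 f) :=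
  (SchwartzMap.fourierTransformCLM ℝ (toSchwartz f hf h2)).integrable

/-- Double Fourier-type integral of a smooth compactly supported function, in the
"physicist" normalisation: it evaluates the function at `v/2` up to a `(2π)ⁿ` factor. -/
lemma key {n : ℕ} (g : EuclideanSpace ℝ (Fin n) → ℂ) (hg : ContDiff ℝ (⊤ : ℕ∞) g)
    (hgs : HasCompactSupport g) (v : EuclideanSpace ℝ (Fin n)) :
    (∫ X : EuclideanSpace ℝ (Fin n), Complex.exp (Complex.I / 2 * (⟪v, X⟫_ℝ : ℂ)) *
      ∫ ξ : EuclideanSpace ℝ (Fin n), Complex.exp (-Complex.I * (⟪ξ, X⟫_ℝ : ℂ)) * g ξ)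
    = (((2 * Real.pi) ^ n : ℝ) : ℂ) * g ((2 : ℝ)⁻¹ • v) := by
  have hπ : (2 * Real.pi) ≠ 0 := by positivity
  have hgint : Integrable g := hg.continuous.integrable_of_hasCompactSupport hgs
  have hFint : Integrable (𝓕 g) := integrable_fourier g hg hgs
  have h1 : ∀ X : EuclideanSpace ℝ (Fin n),
      (∫ ξ : EuclideanSpace ℝ (Fin n), Complex.exp (-Complex.I * (⟪ξ, X⟫_ℝ : ℂ)) * g ξ)
      = 𝓕 g ((2 * Real.pi)⁻¹ • X) := by
    intro X
    rw [Real.fourier_eq']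
    refine integral_congr_ae (Filter.Eventually.of_forall fun ξ => ?_)
    dsimp only
    rw [real_inner_smul_right, smul_eq_mul]
    congr 1
    rw [show -2 * Real.pi * ((2 * Real.pi)⁻¹ * ⟪ξ, X⟫_ℝ) = -⟪ξ, X⟫_ℝ by field_simp]
    push_cast
    ring
  simp only [h1]
  set ψ : EuclideanSpace ℝ (Fin n) → ℂ := fun w =>
    Complex.exp (((2 * Real.pi * ⟪w, (2 : ℝ)⁻¹ • v⟫_ℝ : ℝ) : ℂ) * Complex.I) • 𝓕 g w with hψ
  have h2 : (fun X : EuclideanSpace ℝ (Fin n) =>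
        Complex.exp (Complex.I / 2 * (⟪v, X⟫_ℝ : ℂ)) * 𝓕 g ((2 * Real.pi)⁻¹ • X))
      = fun X : EuclideanSpace ℝ (Fin n) => ψ ((2 * Real.pi)⁻¹ • X) := by
    funext X
    rw [hψ]
    dsimp only
    rw [real_inner_smul_left, real_inner_smul_right, smul_eq_mul]
    congr 1
    rw [show 2 * Real.pi * ((2 * Real.pi)⁻¹ * ((2:ℝ)⁻¹ * ⟪X, v⟫_ℝ)) = 2⁻¹ * ⟪v, X⟫_ℝ by
      rw [real_inner_comm X v]; field_simp]
    push_cast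
    ring
  rw [h2, MeasureTheory.Measure.integral_comp_inv_smul_of_nonneg volume ψ
    (by positivity : (0:ℝ) ≤ 2 * Real.pi)]
  have h3 : (∫ w : EuclideanSpace ℝ (Fin n), ψ w) = 𝓕⁻ (𝓕 g) ((2 : ℝ)⁻¹ • v) := by
    rw [Real.fourierInv_eq']
  rw [h3, hgint.fourierInv_fourier_eq hFint hg.continuous.continuousAt, finrank_euclideanSpace_fin,
    Complex.real_smul]

/-- Evaluation of the quadruple oscillatory integral. -/
lemma quad {n : ℕ} (η : EuclideanSpace ℝ (Fin n) →ₗ[ℝ] EuclideanSpace ℝ (Fin n))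
    (hη : Function.Bijective η)
    (H : EuclideanSpace ℝ (Fin n) → ℂ) (hH : ContDiff ℝ (⊤ : ℕ∞) H)
    (hHsupp : HasCompactSupport H)
    (u w q : EuclideanSpace ℝ (Fin n)) (ℏ : ℝ) :
    (∫ X : EuclideanSpace ℝ (Fin n),
        Complex.exp (Complex.I * (⟪w, q⟫_ℝ : ℂ)) *
          Complex.exp (Complex.I / 2 * (⟪w, X⟫_ℝ : ℂ)) *
            ∫ ξ : EuclideanSpace ℝ (Fin n),
              Complex.exp (-Complex.I * (⟪ξ, X⟫_ℝ : ℂ)) *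
                ∫ Y : EuclideanSpace ℝ (Fin n),
                  Complex.exp (Complex.I * (⟪u, q + ℏ • η ξ⟫_ℝ : ℂ)) *
                    Complex.exp (Complex.I / 2 * (⟪u, Y⟫_ℝ : ℂ)) *
                      ∫ ζ : EuclideanSpace ℝ (Fin n),
                        Complex.exp (-Complex.I * (⟪ζ, Y⟫_ℝ : ℂ)) * H (η (ζ + ξ)))
    = (((2 * Real.pi) ^ (2 * n) : ℝ) : ℂ) *
        Complex.exp (Complex.I * ((⟪u, q⟫_ℝ : ℂ) + (⟪w, q⟫_ℝ : ℂ))) *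
        Complex.exp (Complex.I * ℏ * (⟪u, η w⟫_ℝ : ℂ) / 2) * H ((2 : ℝ)⁻¹ • η (u + w)) := by
  classical
  let e : EuclideanSpace ℝ (Fin n) ≃L[ℝ] EuclideanSpace ℝ (Fin n) :=
    (LinearEquiv.ofBijective η hη).toContinuousLinearEquiv
  have hηc : ContDiff ℝ (⊤ : ℕ∞) (fun x : EuclideanSpace ℝ (Fin n) => η x) :=
    (e : EuclideanSpace ℝ (Fin n) →L[ℝ] EuclideanSpace ℝ (Fin n)).contDiff
  simp only [mul_assoc, integral_const_mul]
  have hg1 : ∀ ξ : EuclideanSpace ℝ (Fin n),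
      ContDiff ℝ (⊤ : ℕ∞) (fun ζ : EuclideanSpace ℝ (Fin n) => H (η (ζ + ξ))) := fun ξ =>
    hH.comp (hηc.comp (contDiff_id.add contDiff_const))
  have hs1 : ∀ ξ : EuclideanSpace ℝ (Fin n),
      HasCompactSupport (fun ζ : EuclideanSpace ℝ (Fin n) => H (η (ζ + ξ))) := fun ξ =>
    hHsupp.comp_homeomorph ((Homeomorph.addRight ξ).trans e.toHomeomorph)
  have hY : ∀ ξ : EuclideanSpace ℝ (Fin n),
      (∫ Y : EuclideanSpace ℝ (Fin n), Complex.exp (Complex.I / 2 * (⟪u, Y⟫_ℝ : ℂ)) *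
        ∫ ζ : EuclideanSpace ℝ (Fin n), Complex.exp (-Complex.I * (⟪ζ, Y⟫_ℝ : ℂ)) * H (η (ζ + ξ)))
      = (((2 * Real.pi) ^ n : ℝ) : ℂ) * H (η ((2 : ℝ)⁻¹ • u + ξ)) := fun ξ =>
    key _ (hg1 ξ) (hs1 ξ) u
  simp only [hY]
  have hg2 : ContDiff ℝ (⊤ : ℕ∞) (fun ξ : EuclideanSpace ℝ (Fin n) =>
      Complex.exp (Complex.I * (⟪u, q + ℏ • η ξ⟫_ℝ : ℂ)) *
        ((((2 * Real.pi) ^ n : ℝ) : ℂ) * H (η ((2 : ℝ)⁻¹ • u + ξ)))) := by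
    have h1 : ContDiff ℝ (⊤ : ℕ∞) (fun ξ : EuclideanSpace ℝ (Fin n) => ⟪u, q + ℏ • η ξ⟫_ℝ) :=
      contDiff_const.inner ℝ (contDiff_const.add (hηc.const_smul ℏ))
    have h2 : ContDiff ℝ (⊤ : ℕ∞) (fun ξ : EuclideanSpace ℝ (Fin n) =>
        Complex.exp (Complex.I * (⟪u, q + ℏ • η ξ⟫_ℝ : ℂ))) :=
      (contDiff_const.mul (Complex.ofRealCLM.contDiff.comp h1)).cexp
    exact h2.mul (contDiff_const.mul
      (hH.comp (hηc.comp (contDiff_const.add contDiff_id))))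
  have hs2 : HasCompactSupport (fun ξ : EuclideanSpace ℝ (Fin n) =>
      Complex.exp (Complex.I * (⟪u, q + ℏ • η ξ⟫_ℝ : ℂ)) *
        ((((2 * Real.pi) ^ n : ℝ) : ℂ) * H (η ((2 : ℝ)⁻¹ • u + ξ)))) := by
    have hs : HasCompactSupport (fun ξ : EuclideanSpace ℝ (Fin n) => H (η ((2 : ℝ)⁻¹ • u + ξ))) :=
      hHsupp.comp_homeomorph ((Homeomorph.addLeft ((2 : ℝ)⁻¹ • u)).trans e.toHomeomorph)
    exact (hs.mul_left).mul_left
  rw [key _ hg2 hs2 w]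
  have h5 : η ((2 : ℝ)⁻¹ • u + (2 : ℝ)⁻¹ • w) = (2 : ℝ)⁻¹ • η (u + w) := by
    rw [← smul_add, η.map_smul]
  have h6 : ⟪u, q + ℏ • η ((2 : ℝ)⁻¹ • w)⟫_ℝ = ⟪u, q⟫_ℝ + ℏ * (2⁻¹ * ⟪u, η w⟫_ℝ) := by
    rw [η.map_smul, inner_add_right, real_inner_smul_right, real_inner_smul_right]
  rw [h5, h6]
  push_cast
  rw [show Complex.I * ((⟪u, q⟫_ℝ : ℂ) + (ℏ : ℂ) * (2⁻¹ * (⟪u, η w⟫_ℝ : ℂ)))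
      = Complex.I * (⟪u, q⟫_ℝ : ℂ) + Complex.I * ℏ * (⟪u, η w⟫_ℝ : ℂ) / 2 from by ring,
    show Complex.I * ((⟪u, q⟫_ℝ : ℂ) + (⟪w, q⟫_ℝ : ℂ))
      = Complex.I * (⟪u, q⟫_ℝ : ℂ) + Complex.I * (⟪w, q⟫_ℝ : ℂ) from by ring,
    Complex.exp_add, Complex.exp_add]
  ring

/-- The elementary limit `(e^{iℏc/2} - e^{-iℏc/2})/(iℏ) → c`. -/
lemma lim (c : ℝ) :
    Filter.Tendsto (fun ℏ : ℝ =>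
        (Complex.exp (Complex.I * ℏ * c / 2) - Complex.exp (-(Complex.I * ℏ * c / 2))) /
          (Complex.I * ℏ))
      (nhdsWithin (0 : ℝ) {(0 : ℝ)}ᶜ) (nhds (c : ℂ)) := by
  set f : ℝ → ℂ := fun t =>
    Complex.exp (Complex.I * t * c / 2) - Complex.exp (-(Complex.I * t * c / 2)) with hf
  have hf0 : f 0 = 0 := by simp [hf]
  have hd : HasDerivAt f (Complex.I * c) 0 := by
    have h0 : HasDerivAt (fun t : ℝ => (t : ℂ)) 1 0 := Complex.ofRealCLM.hasDerivAt
    have h1 : HasDerivAt (fun t : ℝ => Complex.I * t * c / 2) (Complex.I * c / 2) 0 := by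
      have := (h0.const_mul Complex.I).mul_const (c : ℂ)
      have h2 := this.div_const 2
      simpa using h2
    have hpos := h1.cexp
    have hneg := h1.neg.cexp
    have := hpos.sub hneg
    simp only [hf]
    convert this using 1
    · rfl
    · rfl
    simp
  have hslope := hasDerivAt_iff_tendsto_slope.mp hd
  have h2 : Filter.Tendsto (fun ℏ : ℝ => Complex.I⁻¹ * slope f 0 ℏ)
      (nhdsWithin (0 : ℝ) {(0 : ℝ)}ᶜ) (nhds (Complex.I⁻¹ * (Complex.I * c))) :=
    hslope.const_mul _
  have h3 : Complex.I⁻¹ * (Complex.I * (c : ℂ)) = (c : ℂ) := by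
    rw [Complex.inv_I, show -Complex.I * (Complex.I * (c : ℂ))
      = -(Complex.I * Complex.I) * c from by ring, Complex.I_mul_I]
    ring
  rw [h3] at h2
  refine h2.congr' ?_
  filter_upwards [self_mem_nhdsWithin] with ℏ (hℏ : ℏ ≠ 0)
  rw [slope_def_module, hf0, sub_zero, sub_zero, Complex.real_smul, Complex.ofReal_inv]
  have hℏ' : (ℏ : ℂ) ≠ 0 := Complex.ofReal_ne_zero.mpr hℏ
  rw [eq_div_iff (mul_ne_zero Complex.I_ne_zero hℏ'),
    show Complex.I⁻¹ * ((ℏ : ℂ)⁻¹ * f ℏ) * (Complex.I * ℏ)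
      = (Complex.I⁻¹ * Complex.I) * (((ℏ : ℂ))⁻¹ * ℏ) * f ℏ from by ring,
    inv_mul_cancel₀ Complex.I_ne_zero, inv_mul_cancel₀ hℏ']
  ring

end QTC

end

open MeasureTheory InnerProductSpace

/-- The commutator of quantised torus characters, divided by `iℏ`, converges as `ℏ → 0`
(`ℏ ≠ 0`) to `(2π)^{2n} ⟨r, η r′⟩ e^{i⟨r+r′,q⟩} H(η(r+r′)/2)`, the quantisation of the
Poisson bracket. -/
theorem quantisation_torus_commutator_tendsto (n : ℕ)
    (η : EuclideanSpace ℝ (Fin n) →ₗ[ℝ] EuclideanSpace ℝ (Fin n))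
    (hη : Function.Bijective η)
    (hskew : ∀ u v : EuclideanSpace ℝ (Fin n), ⟪η u, v⟫_ℝ = -⟪u, η v⟫_ℝ)
    (r r' q : EuclideanSpace ℝ (Fin n))
    (H : EuclideanSpace ℝ (Fin n) → ℂ) (hH : ContDiff ℝ (⊤ : ℕ∞) H)
    (hHsupp : HasCompactSupport H)
    (F G : ℝ → ℂ)
    (hF : F = fun ℏ : ℝ =>
      ∫ X : EuclideanSpace ℝ (Fin n),
        Complex.exp (Complex.I * (⟪r', q⟫_ℝ : ℂ)) *
          Complex.exp (Complex.I / 2 * (⟪r', X⟫_ℝ : ℂ)) *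
            ∫ ξ : EuclideanSpace ℝ (Fin n),
              Complex.exp (-Complex.I * (⟪ξ, X⟫_ℝ : ℂ)) *
                ∫ Y : EuclideanSpace ℝ (Fin n),
                  Complex.exp (Complex.I * (⟪r, q + ℏ • η ξ⟫_ℝ : ℂ)) *
                    Complex.exp (Complex.I / 2 * (⟪r, Y⟫_ℝ : ℂ)) *
                      ∫ ζ : EuclideanSpace ℝ (Fin n),
                        Complex.exp (-Complex.I * (⟪ζ, Y⟫_ℝ : ℂ)) * H (η (ζ + ξ)))
    (hG : G = fun ℏ : ℝ =>
      ∫ X : EuclideanSpace ℝ (Fin n),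
        Complex.exp (Complex.I * (⟪r, q⟫_ℝ : ℂ)) *
          Complex.exp (Complex.I / 2 * (⟪r, X⟫_ℝ : ℂ)) *
            ∫ ξ : EuclideanSpace ℝ (Fin n),
              Complex.exp (-Complex.I * (⟪ξ, X⟫_ℝ : ℂ)) *
                ∫ Y : EuclideanSpace ℝ (Fin n),
                  Complex.exp (Complex.I * (⟪r', q + ℏ • η ξ⟫_ℝ : ℂ)) *
                    Complex.exp (Complex.I / 2 * (⟪r', Y⟫_ℝ : ℂ)) *
                      ∫ ζ : EuclideanSpace ℝ (Fin n),
                        Complex.exp (-Complex.I * (⟪ζ, Y⟫_ℝ : ℂ)) * H (η (ζ + ξ))) :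
    Filter.Tendsto (fun ℏ : ℝ => (F ℏ - G ℏ) / (Complex.I * (ℏ : ℂ)))
      (nhdsWithin (0 : ℝ) {(0 : ℝ)}ᶜ)
      (nhds ((((2 * Real.pi) ^ (2 * n) : ℝ) : ℂ) * ((⟪r, η r'⟫_ℝ : ℝ) : ℂ) *
        Complex.exp (Complex.I * (⟪r + r', q⟫_ℝ : ℂ)) * H ((2 : ℝ)⁻¹ • η (r + r')))) := by
  have hb : ⟪r', η r⟫_ℝ = -⟪r, η r'⟫_ℝ := by
    rw [real_inner_comm]; exact hskew r r'
  set C : ℂ := (((2 * Real.pi) ^ (2 * n) : ℝ) : ℂ) *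
      Complex.exp (Complex.I * ((⟪r, q⟫_ℝ : ℂ) + (⟪r', q⟫_ℝ : ℂ))) *
      H ((2 : ℝ)⁻¹ • η (r + r')) with hC
  have hfun : (fun ℏ : ℝ => (F ℏ - G ℏ) / (Complex.I * (ℏ : ℂ)))
      = fun ℏ : ℝ => C *
        ((Complex.exp (Complex.I * ℏ * (⟪r, η r'⟫_ℝ : ℂ) / 2) -
          Complex.exp (-(Complex.I * ℏ * (⟪r, η r'⟫_ℝ : ℂ) / 2))) / (Complex.I * ℏ)) := by
    funext ℏ
    simp only [hF, hG]
    rw [QTC.quad η hη H hH hHsupp r r' q ℏ, QTC.quad η hη H hH hHsupp r' r q ℏ, hb,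
      add_comm r' r,
      show ((⟪r', q⟫_ℝ : ℂ) + (⟪r, q⟫_ℝ : ℂ)) = ((⟪r, q⟫_ℝ : ℂ) + (⟪r', q⟫_ℝ : ℂ)) from
        add_comm _ _,
      show Complex.I * (ℏ : ℂ) * ((-⟪r, η r'⟫_ℝ : ℝ) : ℂ) / 2
        = -(Complex.I * ℏ * ((⟪r, η r'⟫_ℝ : ℝ) : ℂ) / 2) from by push_cast; ring, hC]
    ring
  rw [hfun]
  have h := (QTC.lim ⟪r, η r'⟫_ℝ).const_mul C
  convert h using 2
  rw [show (⟪r + r', q⟫_ℝ : ℂ) = (⟪r, q⟫_ℝ : ℂ) + (⟪r', q⟫_ℝ : ℂ) from by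
    rw [inner_add_left]; push_cast; ring, hC]
  ring
end

section
/- For t ∈ (0, 2) define μ(t) = arcsin(t/2)/t. Then μ is differentiable at every t ∈ (0, 2), and for every t ∈ (0, 2) it satisfies ( t · μ′(t) + μ(t) ) · cos( t · μ(t) ) + sin( t · μ(t) )/t = 1. -/
/-- The function `μ(t) = arcsin(t/2)/t` is differentiable on `(0, 2)` and satisfies
`(t μ′(t) + μ(t)) cos(t μ(t)) + sin(t μ(t))/t = 1` there. -/
theorem arcsin_solution_poisson_sphere :
    ∀ t ∈ Set.Ioo (0 : ℝ) 2,
      DifferentiableAt ℝ (fun s : ℝ => Real.arcsin (s / 2) / s) t ∧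
      (t * deriv (fun s : ℝ => Real.arcsin (s / 2) / s) t +
            Real.arcsin (t / 2) / t) *
          Real.cos (t * (Real.arcsin (t / 2) / t)) +
        Real.sin (t * (Real.arcsin (t / 2) / t)) / t = 1 := by
  rintro t ⟨ht0, ht2⟩
  have ht : t ≠ 0 := ne_of_gt ht0
  have h1 : -1 < t / 2 := by linarith
  have h2 : t / 2 < 1 := by linarith
  have hA : HasDerivAt (fun s : ℝ => Real.arcsin (s / 2))
      ((1 / Real.sqrt (1 - (t / 2) ^ 2)) * (1 / 2)) t := by
    have := (Real.hasDerivAt_arcsin (ne_of_gt h1) (ne_of_lt h2)).comp t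
      ((hasDerivAt_id t).div_const 2)
    simpa [Function.comp_def] using this
  have hμ : HasDerivAt (fun s : ℝ => Real.arcsin (s / 2) / s)
      ((((1 / Real.sqrt (1 - (t / 2) ^ 2)) * (1 / 2)) * t - Real.arcsin (t / 2) * 1) / t ^ 2)
      t := hA.div (hasDerivAt_id t) ht
  refine ⟨hμ.differentiableAt, ?_⟩
  rw [hμ.deriv]
  have hcos : Real.cos (Real.arcsin (t / 2)) = Real.sqrt (1 - (t / 2) ^ 2) :=
    Real.cos_arcsin _
  have hsin : Real.sin (Real.arcsin (t / 2)) = t / 2 := Real.sin_arcsin h1.le h2.le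
  have htμ : t * (Real.arcsin (t / 2) / t) = Real.arcsin (t / 2) := by field_simp
  have hpos : (0 : ℝ) < 1 - (t / 2) ^ 2 := by nlinarith
  have hs : Real.sqrt (1 - (t / 2) ^ 2) ≠ 0 := ne_of_gt (Real.sqrt_pos.mpr hpos)
  rw [htμ, hcos, hsin]
  have hs4 : Real.sqrt (4 - t ^ 2) ≠ 0 := by
    refine ne_of_gt (Real.sqrt_pos.mpr ?_)
    nlinarith
  have hc : Real.sqrt (4 - t ^ 2) * (Real.sqrt (4 - t ^ 2))⁻¹ = 1 := mul_inv_cancel₀ hs4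
  field_simp
  norm_num
  linear_combination t * hc
end
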